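/- Let Γ₁ and Γ₂ be finite simple graphs, each link-regular, such that for every k ≥ 1 they have the same number of cliques of size k, and such that |Link(σ)| = |Link(σ′)| for all cliques σ of Γ₁ and σ′ of Γ₂ with |σ| = |σ′|. Then the right-angled Coxeter groups G₁ and G₂ based on Γ₁ and Γ₂ have identical geodesic growth functions: γ₁(n) = γ₂(n) for all n ∈ ℕ. -/

import Mathlib

/-- The relators of the right-angled Coxeter group on a simple graph `Γ`. -/
def racgRels {V : Type*} (Γ : SimpleGraph V) : Set (FreeGroup V) :=
  {r | (∃ s : V, r = FreeGroup.of s ^ 2) ∨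
       (∃ s t : V, Γ.Adj s t ∧ r = (FreeGroup.of s * FreeGroup.of t) ^ 2)}

/-- The natural projection from words to the right-angled Coxeter group. -/
def racgPi {V : Type*} (Γ : SimpleGraph V) (w : List V) :
    PresentedGroup (racgRels Γ) :=
  (w.map fun s => (PresentedGroup.of s : PresentedGroup (racgRels Γ))).prod

/-- A word is geodesic if no shorter word represents the same element. -/
def racgIsGeodesic {V : Type*} (Γ : SimpleGraph V) (w : List V) : Prop :=
  ∀ w' : List V, racgPi Γ w' = racgPi Γ w → w.length ≤ w'.length

/-- The geodesic growth function of the right-angled Coxeter group on `Γ`. -/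
noncomputable def racgGeodesicGrowth {V : Type*} (Γ : SimpleGraph V) (n : ℕ) : ℕ :=
  Nat.card {w : List V // racgIsGeodesic Γ w ∧ w.length = n}

/-- `Link(σ)`: the set of vertices outside `σ` adjacent to every vertex of `σ`. -/
def graphLink {V : Type*} [Fintype V] [DecidableEq V] (Γ : SimpleGraph V)
    [DecidableRel Γ.Adj] (σ : Finset V) : Finset V :=
  Finset.univ.filter fun v => v ∉ σ ∧ ∀ u ∈ σ, Γ.Adj v u

/-- A graph is link-regular if `|Link(σ)|` depends only on `|σ|` over all
nonempty cliques `σ`. -/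
def LinkRegular {V : Type*} [Fintype V] [DecidableEq V] (Γ : SimpleGraph V)
    [DecidableRel Γ.Adj] : Prop :=
  ∀ σ σ' : Finset V, Γ.IsClique (σ : Set V) → Γ.IsClique (σ' : Set V) →
    σ.Nonempty → σ'.Nonempty → σ.card = σ'.card →
      (graphLink Γ σ).card = (graphLink Γ σ').card

set_option linter.unusedSectionVars false

namespace RacgAux

variable {V : Type*} [DecidableEq V] (Γ : SimpleGraph V) [DecidableRel Γ.Adj]

/-- The set of letters deletable from the front: `s ∈ stateB w` iff `w` has an
occurrence of `s` all of whose preceding letters are adjacent to `s`. -/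
def stateB : List V → Finset V
  | [] => ∅
  | t :: w => insert t ((stateB w).filter (fun x => Γ.Adj t x))

@[simp] lemma stateB_nil : stateB Γ ([] : List V) = ∅ := rfl

@[simp] lemma stateB_cons (t : V) (w : List V) :
    stateB Γ (t :: w) = insert t ((stateB Γ w).filter (fun x => Γ.Adj t x)) := rfl

/-- No-pattern predicate: geodesic words. -/
def noPat : List V → Prop
  | [] => True
  | t :: w => t ∉ stateB Γ w ∧ noPat w

@[simp] lemma noPat_nil : noPat Γ ([] : List V) := trivial

@[simp] lemma noPat_cons (t : V) (w : List V) :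
    noPat Γ (t :: w) ↔ t ∉ stateB Γ w ∧ noPat Γ w := Iff.rfl

instance : DecidablePred (noPat Γ) := fun w => by
  induction w with
  | nil => exact isTrue trivial
  | cons t w ih => exact @instDecidableAnd _ _ _ ih

lemma mem_stateB_iff {s : V} {w : List V} :
    s ∈ stateB Γ w ↔ ∃ q r, w = q ++ s :: r ∧ ∀ x ∈ q, Γ.Adj s x := by
  induction w with
  | nil => simp
  | cons t w ih =>
    simp only [stateB_cons, Finset.mem_insert, Finset.mem_filter, ih]
    constructor
    · rintro (rfl | ⟨⟨q, r, rfl, hq⟩, hadj⟩)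
      · exact ⟨[], w, rfl, by simp⟩
      · exact ⟨t :: q, r, rfl, by
          intro x hx
          rcases List.mem_cons.mp hx with rfl | hx
          · exact Γ.adj_symm hadj
          · exact hq x hx⟩
    · rintro ⟨q, r, hqr, hq⟩
      cases q with
      | nil =>
        simp only [List.nil_append] at hqr
        injection hqr with h1 h2
        exact Or.inl h1.symm
      | cons c q =>
        right
        simp only [List.cons_append, List.cons.injEq] at hqr
        obtain ⟨rfl, hw⟩ := hqr
        exact ⟨⟨q, r, hw, fun x hx => hq x (List.mem_cons_of_mem _ hx)⟩,
          Γ.adj_symm (hq _ (List.mem_cons_self))⟩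

lemma mem_of_mem_stateB {s : V} {w : List V} (h : s ∈ stateB Γ w) : s ∈ w := by
  obtain ⟨q, r, rfl, -⟩ := (mem_stateB_iff Γ).mp h
  simp

lemma stateB_swap {x y : V} (hxy : Γ.Adj x y) (a b : List V) :
    stateB Γ (a ++ x :: y :: b) = stateB Γ (a ++ y :: x :: b) := by
  induction a with
  | nil =>
    simp only [List.nil_append, stateB_cons]
    ext s
    simp only [Finset.mem_insert, Finset.mem_filter]
    have hyx := Γ.adj_symm hxy
    have hne : x ≠ y := hxy.ne
    constructor
    · rintro (rfl | ⟨(rfl | ⟨hs, hys⟩), hxs⟩)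
      · exact Or.inr ⟨Or.inl rfl, hyx⟩
      · exact Or.inl rfl
      · exact Or.inr ⟨Or.inr ⟨hs, hxs⟩, hys⟩
    · rintro (rfl | ⟨(rfl | ⟨hs, hxs⟩), hys⟩)
      · exact Or.inr ⟨Or.inl rfl, hxy⟩
      · exact Or.inl rfl
      · exact Or.inr ⟨Or.inr ⟨hs, hys⟩, hxs⟩
  | cons c a ih => simp only [List.cons_append, stateB_cons, ih]

lemma noPat_swap {x y : V} (hxy : Γ.Adj x y) (a b : List V) :
    noPat Γ (a ++ x :: y :: b) ↔ noPat Γ (a ++ y :: x :: b) := by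
  induction a with
  | nil =>
    have h1 : ∀ {u v : V}, Γ.Adj u v →
        ((u ∈ stateB Γ b → ¬ Γ.Adj v u) ↔ u ∉ stateB Γ b) :=
      fun huv => ⟨fun h hu => (h hu) huv.symm, fun h hu => absurd hu h⟩
    simp only [List.nil_append, noPat_cons, stateB_cons, Finset.mem_insert,
      Finset.mem_filter, not_or, not_and]
    rw [h1 hxy, h1 (Γ.adj_symm hxy)]
    constructor
    · rintro ⟨⟨-, hx⟩, hy, hw⟩
      exact ⟨⟨hxy.ne', hy⟩, hx, hw⟩
    · rintro ⟨⟨-, hy⟩, hx, hw⟩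
      exact ⟨⟨hxy.ne, hx⟩, hy, hw⟩
  | cons c a ih =>
    simp only [List.cons_append, noPat_cons, ih, stateB_swap Γ hxy]

/-- Having a shortening pattern. -/
def hasPat (w : List V) : Prop :=
  ∃ (p : List V) (s : V) (q r : List V),
    w = p ++ s :: (q ++ s :: r) ∧ ∀ x ∈ q, Γ.Adj s x

lemma hasPat_cons {t : V} {w : List V} :
    hasPat Γ (t :: w) ↔ t ∈ stateB Γ w ∨ hasPat Γ w := by
  constructor
  · rintro ⟨p, s, q, r, hw, hq⟩
    cases p with
    | nil =>
      simp only [List.nil_append] at hw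
      injection hw with h1 h2
      subst h1; subst h2
      exact Or.inl ((mem_stateB_iff Γ).mpr ⟨q, r, rfl, hq⟩)
    | cons c p =>
      simp only [List.cons_append] at hw
      injection hw with h1 h2
      exact Or.inr ⟨p, s, q, r, h2, hq⟩
  · rintro (h | ⟨p, s, q, r, hw, hq⟩)
    · obtain ⟨q, r, rfl, hq⟩ := (mem_stateB_iff Γ).mp h
      exact ⟨[], t, q, r, rfl, hq⟩
    · exact ⟨t :: p, s, q, r, by rw [hw]; rfl, hq⟩

lemma noPat_iff_not_hasPat {w : List V} : noPat Γ w ↔ ¬ hasPat Γ w := by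
  induction w with
  | nil =>
    simp only [noPat_nil, true_iff]
    rintro ⟨p, s, q, r, hw, -⟩
    exact absurd hw (by simp)
  | cons t w ih =>
    rw [noPat_cons, ih, hasPat_cons]
    tauto

lemma mem_stateB_insert {s a : V} {q r : List V} (hq : ∀ x ∈ q, Γ.Adj s x)
    (hsa : Γ.Adj s a) (h : a ∈ stateB Γ (q ++ r)) : a ∈ stateB Γ (q ++ s :: r) := by
  induction q with
  | nil =>
    simp only [List.nil_append, stateB_cons, Finset.mem_insert, Finset.mem_filter]
    exact Or.inr ⟨h, hsa⟩
  | cons c q ih =>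
    simp only [List.cons_append, stateB_cons, Finset.mem_insert, Finset.mem_filter] at h ⊢
    rcases h with rfl | ⟨h, hca⟩
    · exact Or.inl rfl
    · exact Or.inr ⟨ih (fun x hx => hq x (List.mem_cons_of_mem _ hx)) h, hca⟩

lemma hasPat_insert {s : V} {q r : List V} (h : hasPat Γ (q ++ r))
    (hq : ∀ x ∈ q, Γ.Adj s x) : hasPat Γ (q ++ s :: r) := by
  induction q with
  | nil =>
    simp only [List.nil_append] at h ⊢
    rw [show s :: r = [] ++ s :: r from rfl, ← List.nil_append (s :: r)]
    obtain ⟨p, u, m, n, hw, hm⟩ := h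
    exact ⟨s :: p, u, m, n, by rw [hw]; rfl, hm⟩
  | cons c q ih =>
    simp only [List.cons_append] at h ⊢
    rcases (hasPat_cons Γ).mp h with hc | hc
    · exact (hasPat_cons Γ).mpr (Or.inl (mem_stateB_insert Γ
        (fun x hx => hq x (List.mem_cons_of_mem _ hx))
        (hq c (List.mem_cons_self)) hc))
    · exact (hasPat_cons Γ).mpr (Or.inr (ih hc (fun x hx => hq x (List.mem_cons_of_mem _ hx))))

lemma noPat_append_of_noPat {s : V} {q r : List V} (h : noPat Γ (q ++ s :: r))
    (hq : ∀ x ∈ q, Γ.Adj s x) : noPat Γ (q ++ r) := by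
  rw [noPat_iff_not_hasPat] at h ⊢
  exact fun hp => h (hasPat_insert Γ hp hq)

lemma not_mem_stateB_append {s : V} {q r : List V} (h : noPat Γ (q ++ s :: r))
    (hq : ∀ x ∈ q, Γ.Adj s x) : s ∉ stateB Γ (q ++ r) := by
  induction q with
  | nil => exact h.1
  | cons c q ih =>
    simp only [List.cons_append, stateB_cons, Finset.mem_insert, Finset.mem_filter]
    push_neg
    refine ⟨(hq c (List.mem_cons_self)).ne, fun hmem _ => ?_⟩
    exact absurd hmem (ih h.2 (fun x hx => hq x (List.mem_cons_of_mem _ hx)))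

lemma mem_stateB_erase {s t : V} {w : List V} (hst : s ≠ t)
    (hs : s ∈ stateB Γ w) (ht : t ∈ stateB Γ w) : s ∈ stateB Γ (w.erase t) := by
  induction w with
  | nil => simp at hs
  | cons c w ih =>
    simp only [stateB_cons, Finset.mem_insert, Finset.mem_filter] at hs ht
    by_cases hct : c = t
    · subst hct
      rw [List.erase_cons_head]
      rcases hs with rfl | ⟨hs, -⟩
      · exact absurd rfl hst
      · exact hs
    · rw [List.erase_cons_tail (by simpa using Ne.symm (Ne.intro (fun h => hct h.symm)))]
      rcases ht with rfl | ⟨ht, hct2⟩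
      · exact absurd rfl hct
      rcases hs with rfl | ⟨hs, hcs⟩
      · simp [stateB_cons]
      · simp only [stateB_cons, Finset.mem_insert, Finset.mem_filter]
        exact Or.inr ⟨ih hs ht, hcs⟩

/-- One commutation move. -/
def Step (w w' : List V) : Prop :=
  ∃ (a : List V) (x y : V) (b : List V),
    Γ.Adj x y ∧ w = a ++ x :: y :: b ∧ w' = a ++ y :: x :: b

/-- Commutation equivalence. -/
def Rel : List V → List V → Prop := Relation.EqvGen (Step Γ)

lemma Step.symm' {w w' : List V} (h : Step Γ w w') : Step Γ w' w := by
  obtain ⟨a, x, y, b, hxy, h1, h2⟩ := h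
  exact ⟨a, y, x, b, Γ.adj_symm hxy, h2, h1⟩

lemma Rel.refl' (w : List V) : Rel Γ w w := Relation.EqvGen.refl w

lemma Rel.of_step {w w' : List V} (h : Step Γ w w') : Rel Γ w w' :=
  Relation.EqvGen.rel _ _ h

lemma Rel.symm' {w w' : List V} (h : Rel Γ w w') : Rel Γ w' w :=
  Relation.EqvGen.symm _ _ h

lemma Rel.trans' {w w' w'' : List V} (h : Rel Γ w w') (h' : Rel Γ w' w'') : Rel Γ w w'' :=
  Relation.EqvGen.trans _ _ _ h h'

lemma Step.length_eq {w w' : List V} (h : Step Γ w w') : w.length = w'.length := by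
  obtain ⟨a, x, y, b, -, rfl, rfl⟩ := h
  simp

lemma Rel.length_eq {w w' : List V} (h : Rel Γ w w') : w.length = w'.length := by
  induction h with
  | rel _ _ h => exact h.length_eq Γ
  | refl => rfl
  | symm _ _ _ ih => exact ih.symm
  | trans _ _ _ _ _ ih1 ih2 => exact ih1.trans ih2

lemma Step.stateB_eq {w w' : List V} (h : Step Γ w w') : stateB Γ w = stateB Γ w' := by
  obtain ⟨a, x, y, b, hxy, rfl, rfl⟩ := h
  exact stateB_swap Γ hxy a b

lemma Rel.stateB_eq {w w' : List V} (h : Rel Γ w w') : stateB Γ w = stateB Γ w' := by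
  induction h with
  | rel _ _ h => exact h.stateB_eq Γ
  | refl => rfl
  | symm _ _ _ ih => exact ih.symm
  | trans _ _ _ _ _ ih1 ih2 => exact ih1.trans ih2

lemma Step.noPat_iff {w w' : List V} (h : Step Γ w w') : noPat Γ w ↔ noPat Γ w' := by
  obtain ⟨a, x, y, b, hxy, rfl, rfl⟩ := h
  exact noPat_swap Γ hxy a b

lemma Rel.noPat_iff {w w' : List V} (h : Rel Γ w w') : noPat Γ w ↔ noPat Γ w' := by
  induction h with
  | rel _ _ h => exact h.noPat_iff Γ
  | refl => rfl
  | symm _ _ _ ih => exact ih.symm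
  | trans _ _ _ _ _ ih1 ih2 => exact ih1.trans ih2

lemma Rel.cons {w w' : List V} (t : V) (h : Rel Γ w w') : Rel Γ (t :: w) (t :: w') := by
  induction h with
  | rel u v h =>
    obtain ⟨a, x, y, b, hxy, rfl, rfl⟩ := h
    exact Rel.of_step Γ ⟨t :: a, x, y, b, hxy, rfl, rfl⟩
  | refl u => exact Rel.refl' Γ _
  | symm _ _ _ ih => exact ih.symm' Γ
  | trans _ _ _ _ _ ih1 ih2 => exact Rel.trans' Γ ih1 ih2

lemma Rel.bubble {s : V} (q r : List V) (hq : ∀ x ∈ q, Γ.Adj s x) :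
    Rel Γ (s :: (q ++ r)) (q ++ s :: r) := by
  induction q with
  | nil => exact Rel.refl' Γ _
  | cons c q ih =>
    refine Rel.trans' Γ (Rel.of_step Γ ⟨[], s, c, q ++ r,
      hq c (List.mem_cons_self), rfl, rfl⟩) ?_
    exact Rel.cons Γ c (ih (fun x hx => hq x (List.mem_cons_of_mem _ hx)))

/-- The action of a generator on words. -/
def fstep (s : V) (w : List V) : List V :=
  if s ∈ stateB Γ w then w.erase s else s :: w

lemma exists_split_of_mem_stateB {s : V} {w : List V} (h : s ∈ stateB Γ w) :
    ∃ q r, w = q ++ s :: r ∧ (∀ x ∈ q, Γ.Adj s x) ∧ s ∉ q ∧ w.erase s = q ++ r := by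
  obtain ⟨q, r, rfl, hq⟩ := (mem_stateB_iff Γ).mp h
  have hsq : s ∉ q := fun hs => (hq s hs).ne rfl
  exact ⟨q, r, rfl, hq, hsq, by
    rw [List.erase_append_right _ hsq, List.erase_cons_head]⟩

lemma noPat_fstep {s : V} {w : List V} (h : noPat Γ w) : noPat Γ (fstep Γ s w) := by
  unfold fstep
  split_ifs with hs
  · obtain ⟨q, r, rfl, hq, -, he⟩ := exists_split_of_mem_stateB Γ hs
    rw [he]
    exact noPat_append_of_noPat Γ h hq
  · exact (noPat_cons Γ s w).mpr ⟨hs, h⟩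

lemma fstep_length_le (s : V) (w : List V) : (fstep Γ s w).length ≤ w.length + 1 := by
  unfold fstep
  split_ifs with hs
  · exact (List.length_erase_le).trans (Nat.le_succ _)
  · simp

lemma fstep_step {s : V} {w w' : List V} (h : Step Γ w w') :
    Rel Γ (fstep Γ s w) (fstep Γ s w') := by
  have hB : stateB Γ w = stateB Γ w' := h.stateB_eq Γ
  obtain ⟨a, x, y, b, hxy, rfl, rfl⟩ := h
  unfold fstep
  rw [← hB]
  split_ifs with hs
  · -- erase case
    by_cases ha : s ∈ a
    · rw [List.erase_append_left _ ha, List.erase_append_left _ ha]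
      exact Rel.of_step Γ ⟨a.erase s, x, y, b, hxy, rfl, rfl⟩
    · by_cases hsx : s = x
      · subst hsx
        rw [List.erase_append_right _ ha, List.erase_append_right _ ha,
          List.erase_cons_head, List.erase_cons_tail (by simp [hxy.ne']),
          List.erase_cons_head]
        exact Rel.refl' Γ _
      · by_cases hsy : s = y
        · subst hsy
          rw [List.erase_append_right _ ha, List.erase_append_right _ ha,
            List.erase_cons_head, List.erase_cons_tail (by simp [hxy.ne]),
            List.erase_cons_head]
          exact Rel.refl' Γ _
        · have hsb : s ∈ b := by
            have := mem_of_mem_stateB Γ hs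
            simp only [List.mem_append, List.mem_cons] at this
            tauto
          rw [List.erase_append_right _ ha, List.erase_append_right _ ha,
            List.erase_cons_tail (by simp [Ne.symm hsx]),
            List.erase_cons_tail (by simp [Ne.symm hsy]),
            List.erase_cons_tail (by simp [Ne.symm hsy]),
            List.erase_cons_tail (by simp [Ne.symm hsx])]
          exact Rel.of_step Γ ⟨a, x, y, b.erase s, hxy, rfl, rfl⟩
  · exact Rel.of_step Γ ⟨s :: a, x, y, b, hxy, rfl, rfl⟩

lemma fstep_rel {s : V} {w w' : List V} (h : Rel Γ w w') :
    Rel Γ (fstep Γ s w) (fstep Γ s w') := by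
  induction h with
  | rel _ _ h => exact fstep_step Γ h
  | refl _ => exact Rel.refl' Γ _
  | symm _ _ _ ih => exact ih.symm' Γ
  | trans _ _ _ _ _ ih1 ih2 => exact Rel.trans' Γ ih1 ih2

lemma fstep_fstep {s : V} {w : List V} (h : noPat Γ w) :
    Rel Γ (fstep Γ s (fstep Γ s w)) w := by
  by_cases hs : s ∈ stateB Γ w
  · obtain ⟨q, r, hw, hq, -, he⟩ := exists_split_of_mem_stateB Γ hs
    have h1 : fstep Γ s w = q ++ r := by rw [fstep, if_pos hs, he]
    have h2 : fstep Γ s (q ++ r) = s :: (q ++ r) := by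
      rw [fstep, if_neg (not_mem_stateB_append Γ (hw ▸ h) hq)]
    rw [h1, h2, hw]
    exact Rel.bubble Γ q r hq
  · have h1 : fstep Γ s w = s :: w := by rw [fstep, if_neg hs]
    have h2 : fstep Γ s (s :: w) = w := by
      rw [fstep, if_pos (by simp [stateB_cons]), List.erase_cons_head]
    rw [h1, h2]
    exact Rel.refl' Γ _
lemma fstep_comm_aux {s t : V} {w : List V} (hst : Γ.Adj s t)
    (ht : t ∈ stateB Γ w) (hs : s ∉ stateB Γ w) :
    fstep Γ s (fstep Γ t w) = fstep Γ t (fstep Γ s w) := by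
  obtain ⟨q, r, hw, hq, -, he⟩ := exists_split_of_mem_stateB Γ ht
  have h1 : fstep Γ t w = q ++ r := by rw [fstep, if_pos ht, he]
  have hsqr : s ∉ stateB Γ (q ++ r) := by
    intro hmem
    exact hs (hw ▸ mem_stateB_insert Γ hq (Γ.adj_symm hst) hmem)
  have h2 : fstep Γ s (q ++ r) = s :: (q ++ r) := by rw [fstep, if_neg hsqr]
  have h3 : fstep Γ s w = s :: w := by rw [fstep, if_neg hs]
  have h4 : t ∈ stateB Γ (s :: w) := by
    simp only [stateB_cons, Finset.mem_insert, Finset.mem_filter]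
    exact Or.inr ⟨ht, hst⟩
  have h5 : fstep Γ t (s :: w) = s :: (w.erase t) := by
    rw [fstep, if_pos h4, List.erase_cons_tail (by simp [hst.ne])]
  rw [h1, h2, h3, h5, he]

lemma fstep_comm {s t : V} {w : List V} (hst : Γ.Adj s t) :
    Rel Γ (fstep Γ s (fstep Γ t w)) (fstep Γ t (fstep Γ s w)) := by
  have hne : s ≠ t := hst.ne
  by_cases hs : s ∈ stateB Γ w <;> by_cases ht : t ∈ stateB Γ w
  · -- both delete
    have h1 : fstep Γ t w = w.erase t := by rw [fstep, if_pos ht]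
    have h2 : fstep Γ s w = w.erase s := by rw [fstep, if_pos hs]
    have h3 : fstep Γ s (w.erase t) = (w.erase t).erase s := by
      rw [fstep, if_pos (mem_stateB_erase Γ hne hs ht)]
    have h4 : fstep Γ t (w.erase s) = (w.erase s).erase t := by
      rw [fstep, if_pos (mem_stateB_erase Γ hne.symm ht hs)]
    rw [h1, h2, h3, h4, List.erase_comm]
    exact Rel.refl' Γ _
  · rw [fstep_comm_aux Γ (Γ.adj_symm hst) hs ht]
    exact Rel.refl' Γ _
  · rw [fstep_comm_aux Γ hst ht hs]
    exact Rel.refl' Γ _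
  · -- both insert
    have h1 : fstep Γ t w = t :: w := by rw [fstep, if_neg ht]
    have h2 : fstep Γ s w = s :: w := by rw [fstep, if_neg hs]
    have h3 : fstep Γ s (t :: w) = s :: t :: w := by
      rw [fstep, if_neg]
      simp only [stateB_cons, Finset.mem_insert, Finset.mem_filter]
      push_neg
      exact ⟨hne, fun hmem _ => absurd hmem hs⟩
    have h4 : fstep Γ t (s :: w) = t :: s :: w := by
      rw [fstep, if_neg]
      simp only [stateB_cons, Finset.mem_insert, Finset.mem_filter]
      push_neg
      exact ⟨hne.symm, fun hmem _ => absurd hmem ht⟩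
    rw [h1, h2, h3, h4]
    exact Rel.of_step Γ ⟨[], s, t, w, hst, rfl, rfl⟩

/-! ### The action on the quotient of pattern-avoiding words -/

/-- Pattern-avoiding words. -/
abbrev PAW := {w : List V // noPat Γ w}

instance pawSetoid : Setoid (PAW Γ) :=
  ⟨fun u v => Rel Γ u.1 v.1,
   ⟨fun _ => Rel.refl' Γ _, fun h => h.symm' Γ, fun h h' => Rel.trans' Γ h h'⟩⟩

/-- Pattern-avoiding words modulo commutation. -/
abbrev QW := Quotient (pawSetoid Γ)

/-- The underlying function of the action of a generator. -/
def gfun (s : V) : QW Γ → QW Γ :=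
  Quotient.map (fun w => ⟨fstep Γ s w.1, noPat_fstep Γ w.2⟩)
    (fun _ _ h => fstep_rel Γ h)

lemma gfun_mk (s : V) (w : PAW Γ) :
    gfun Γ s ⟦w⟧ = ⟦⟨fstep Γ s w.1, noPat_fstep Γ w.2⟩⟧ := rfl

lemma gfun_involutive (s : V) : Function.Involutive (gfun Γ s) := by
  intro x
  induction x using Quotient.ind with
  | _ w =>
    rw [gfun_mk, gfun_mk]
    exact Quotient.sound (fstep_fstep Γ w.2)

/-- The action of a generator as a permutation. -/
def tau (s : V) : Equiv.Perm (QW Γ) := (gfun_involutive Γ s).toPerm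

lemma tau_apply (s : V) (x : QW Γ) : tau Γ s x = gfun Γ s x := rfl

lemma tau_mul_self (s : V) : tau Γ s * tau Γ s = 1 := by
  ext x
  exact gfun_involutive Γ s x

lemma tau_comm {s t : V} (hst : Γ.Adj s t) :
    tau Γ s * tau Γ t = tau Γ t * tau Γ s := by
  ext x
  induction x using Quotient.ind with
  | _ w =>
    show gfun Γ s (gfun Γ t ⟦w⟧) = gfun Γ t (gfun Γ s ⟦w⟧)
    rw [gfun_mk, gfun_mk, gfun_mk, gfun_mk]
    exact Quotient.sound (fstep_comm Γ hst)

lemma tau_rels : ∀ r ∈ racgRels Γ, FreeGroup.lift (tau Γ) r = 1 := by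
  rintro r (⟨s, rfl⟩ | ⟨s, t, hst, rfl⟩)
  · rw [map_pow, FreeGroup.lift_apply_of, pow_two, tau_mul_self]
  · rw [map_pow, map_mul, FreeGroup.lift_apply_of, FreeGroup.lift_apply_of, pow_two]
    calc tau Γ s * tau Γ t * (tau Γ s * tau Γ t)
        = tau Γ s * (tau Γ t * tau Γ s) * tau Γ t := by group
      _ = tau Γ s * (tau Γ s * tau Γ t) * tau Γ t := by rw [tau_comm Γ hst]
      _ = (tau Γ s * tau Γ s) * (tau Γ t * tau Γ t) := by group
      _ = 1 := by rw [tau_mul_self, tau_mul_self, one_mul]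

/-- The homomorphism from the RACG to permutations of `QW`. -/
def phi : PresentedGroup (racgRels Γ) →* Equiv.Perm (QW Γ) :=
  PresentedGroup.toGroup (tau_rels Γ)

lemma racgPi_nil : racgPi Γ [] = 1 := rfl

lemma racgPi_cons (t : V) (w : List V) :
    racgPi Γ (t :: w) = PresentedGroup.of t * racgPi Γ w := by
  simp [racgPi]

lemma racgPi_append (a b : List V) :
    racgPi Γ (a ++ b) = racgPi Γ a * racgPi Γ b := by
  simp [racgPi]

/-- Evaluation of a word on the base point. -/
def emb (w : List V) : QW Γ := phi Γ (racgPi Γ w) ⟦⟨[], noPat_nil Γ⟩⟧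

lemma emb_cons (t : V) (w : List V) : emb Γ (t :: w) = tau Γ t (emb Γ w) := by
  rw [emb, emb, racgPi_cons, map_mul, Equiv.Perm.mul_apply]
  have h : phi Γ (PresentedGroup.of t) = tau Γ t := PresentedGroup.toGroup.of (tau_rels Γ)
  rw [h]

lemma emb_noPat {w : List V} (h : noPat Γ w) : emb Γ w = ⟦⟨w, h⟩⟧ := by
  induction w with
  | nil => rw [emb, racgPi_nil, map_one, Equiv.Perm.one_apply]
  | cons t w ih =>
    obtain ⟨ht, hw⟩ := (noPat_cons Γ t w).mp h
    rw [emb_cons, ih hw, tau_apply, gfun_mk]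
    apply Quotient.sound
    have heq : fstep Γ t w = t :: w := by rw [fstep, if_neg ht]
    show Rel Γ (fstep Γ t w) (t :: w)
    rw [heq]
    exact Rel.refl' Γ _

lemma emb_exists (w : List V) :
    ∃ (u : List V) (hu : noPat Γ u), u.length ≤ w.length ∧ emb Γ w = ⟦⟨u, hu⟩⟧ := by
  induction w with
  | nil => exact ⟨[], noPat_nil Γ, le_refl _, by rw [emb, racgPi_nil, map_one]; rfl⟩
  | cons t w ih =>
    obtain ⟨u, hu, hlen, hemb⟩ := ih
    refine ⟨fstep Γ t u, noPat_fstep Γ hu, ?_, ?_⟩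
    · exact (fstep_length_le Γ t u).trans (by simpa using Nat.succ_le_succ hlen)
    · rw [emb_cons, hemb, tau_apply, gfun_mk]

/-! ### Relations in the group -/

lemma mk_rel_eq_one {r : FreeGroup V} (h : r ∈ racgRels Γ) :
    PresentedGroup.mk (racgRels Γ) r = 1 :=
  (QuotientGroup.eq_one_iff r).mpr (Subgroup.subset_normalClosure h)

lemma of_sq (s : V) :
    (PresentedGroup.of s : PresentedGroup (racgRels Γ)) ^ 2 = 1 := by
  have : (PresentedGroup.of (rels := racgRels Γ) s) ^ 2
      = PresentedGroup.mk (racgRels Γ) (FreeGroup.of s ^ 2) := by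
    rw [map_pow]; rfl
  rw [this]
  exact mk_rel_eq_one Γ (Or.inl ⟨s, rfl⟩)

lemma of_comm {s t : V} (hst : Γ.Adj s t) :
    (PresentedGroup.of s : PresentedGroup (racgRels Γ)) * PresentedGroup.of t
      = PresentedGroup.of t * PresentedGroup.of s := by
  have h2 : ((PresentedGroup.of s : PresentedGroup (racgRels Γ)) * PresentedGroup.of t) ^ 2
      = 1 := by
    have : ((PresentedGroup.of s : PresentedGroup (racgRels Γ)) * PresentedGroup.of t) ^ 2
        = PresentedGroup.mk (racgRels Γ) ((FreeGroup.of s * FreeGroup.of t) ^ 2) := by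
      rw [map_pow, map_mul]; rfl
    rw [this]
    exact mk_rel_eq_one Γ (Or.inr ⟨s, t, hst, rfl⟩)
  have hs := of_sq Γ s
  have ht := of_sq Γ t
  have hinv : ∀ x : PresentedGroup (racgRels Γ), x ^ 2 = 1 → x⁻¹ = x := fun x hx =>
    inv_eq_of_mul_eq_one_right (by rw [← pow_two]; exact hx)
  calc (PresentedGroup.of s : PresentedGroup (racgRels Γ)) * PresentedGroup.of t
      = ((PresentedGroup.of s : PresentedGroup (racgRels Γ)) * PresentedGroup.of t)⁻¹ :=
        (hinv _ h2).symm
    _ = (PresentedGroup.of t)⁻¹ * (PresentedGroup.of s)⁻¹ := mul_inv_rev _ _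
    _ = PresentedGroup.of t * PresentedGroup.of s := by rw [hinv _ ht, hinv _ hs]

lemma of_comm_list {s : V} {q : List V} (hq : ∀ x ∈ q, Γ.Adj s x) :
    (PresentedGroup.of s : PresentedGroup (racgRels Γ)) * racgPi Γ q
      = racgPi Γ q * PresentedGroup.of s := by
  induction q with
  | nil => rw [racgPi_nil, mul_one, one_mul]
  | cons c q ih =>
    rw [racgPi_cons, ← mul_assoc, of_comm Γ (hq c (List.mem_cons_self)), mul_assoc,
      ih (fun x hx => hq x (List.mem_cons_of_mem _ hx)), ← mul_assoc, mul_assoc]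

lemma hasPat_shorter {w : List V} (h : hasPat Γ w) :
    ∃ w' : List V, racgPi Γ w' = racgPi Γ w ∧ w'.length + 2 = w.length := by
  obtain ⟨p, s, q, r, rfl, hq⟩ := h
  refine ⟨p ++ (q ++ r), ?_, by simp; omega⟩
  rw [racgPi_append, racgPi_append, racgPi_append, racgPi_cons, racgPi_append, racgPi_cons]
  congr 1
  calc racgPi Γ q * racgPi Γ r
      = racgPi Γ q * (PresentedGroup.of s * PresentedGroup.of s) * racgPi Γ r := by
        rw [← pow_two, of_sq Γ s, mul_one]
    _ = PresentedGroup.of s * (racgPi Γ q * (PresentedGroup.of s * racgPi Γ r)) := by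
        rw [← mul_assoc, ← mul_assoc, ← of_comm_list Γ hq, mul_assoc, mul_assoc]

/-! ### Geodesics are exactly the pattern-avoiding words -/

lemma isGeodesic_iff_noPat (w : List V) : racgIsGeodesic Γ w ↔ noPat Γ w := by
  constructor
  · intro hgeo
    by_contra hnp
    rw [noPat_iff_not_hasPat, not_not] at hnp
    obtain ⟨w', hpi, hlen⟩ := hasPat_shorter Γ hnp
    have := hgeo w' hpi
    omega
  · intro hnp w' hpi
    obtain ⟨u, hu, hlen, hemb⟩ := emb_exists Γ w'
    have hw : emb Γ w' = emb Γ w := by rw [emb, emb, hpi]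
    rw [emb_noPat Γ hnp, hemb] at hw
    have hrel : Rel Γ u w := Quotient.exact hw
    have := hrel.length_eq Γ
    omega

/-! ### Counting -/

section Counting

variable [Fintype V]

/-- All words of a given length. -/
def words (V : Type*) [Fintype V] [DecidableEq V] : ℕ → Finset (List V)
  | 0 => {[]}
  | n + 1 => Finset.univ.biUnion (fun t : V => (words V n).image (fun w => t :: w))

lemma mem_words {n : ℕ} {w : List V} : w ∈ words V n ↔ w.length = n := by
  induction n generalizing w with
  | zero => cases w <;> simp [words]
  | succ n ih =>
    cases w with
    | nil => simp [words]
    | cons t w =>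
      simp only [words, Finset.mem_biUnion, Finset.mem_univ, Finset.mem_image, true_and,
        List.length_cons]
      constructor
      · rintro ⟨u, v, hv, h⟩
        injection h with h1 h2
        subst h1
        rw [← h2, ih.mp hv]
      · intro h
        exact ⟨t, w, ih.mpr (Nat.succ_injective h), rfl⟩

lemma stateB_isClique (w : List V) : Γ.IsClique (stateB Γ w : Set V) := by
  induction w with
  | nil => simp [SimpleGraph.isClique_empty]
  | cons t w ih =>
    intro a ha b hb hab
    simp only [stateB_cons, Finset.coe_insert, Set.mem_insert_iff, Finset.mem_coe,
      Finset.mem_filter] at ha hb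
    rcases ha with rfl | ⟨ha, hta⟩
    · rcases hb with rfl | ⟨hb, htb⟩
      · exact absurd rfl hab
      · exact htb
    · rcases hb with rfl | ⟨hb, htb⟩
      · exact Γ.adj_symm hta
      · exact ih ha hb hab

lemma stateB_card_le (w : List V) : (stateB Γ w).card ≤ w.length := by
  induction w with
  | nil => simp
  | cons t w ih =>
    calc (stateB Γ (t :: w)).card
        ≤ ((stateB Γ w).filter (fun x => Γ.Adj t x)).card + 1 := Finset.card_insert_le _ _
      _ ≤ (stateB Γ w).card + 1 := Nat.succ_le_succ (Finset.card_filter_le _ _)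
      _ ≤ w.length + 1 := Nat.succ_le_succ ih
      _ = (t :: w).length := by simp

/-- Neighbours of a vertex. -/
def nset (t : V) : Finset V := Finset.univ.filter (fun x => Γ.Adj t x)

lemma mem_nset {t x : V} : x ∈ nset Γ t ↔ Γ.Adj t x := by simp [nset]

/-- Number of ways to extend a clique `σ` by a vertex `t ∉ σ` seeing exactly `j`
vertices of `σ`. -/
def dcount (σ : Finset V) (j : ℕ) : ℕ :=
  (Finset.univ.filter (fun t => t ∉ σ ∧ (σ ∩ nset Γ t).card = j)).card

lemma graphLink_empty : graphLink Γ (∅ : Finset V) = Finset.univ := by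
  ext v; simp [graphLink]

/-- Double counting: the binomial-weighted count equals a sum over `j`-subsets. -/
lemma sum_choose_eq (σ : Finset V) (j : ℕ) :
    ∑ t ∈ Finset.univ.filter (fun t => t ∉ σ), ((σ ∩ nset Γ t).card.choose j)
      = ∑ τ ∈ σ.powersetCard j, ((graphLink Γ τ) \ σ).card := by
  have key : ∀ t : V, (σ ∩ nset Γ t).card.choose j
      = ∑ τ ∈ σ.powersetCard j, (if τ ⊆ nset Γ t then 1 else 0) := by
    intro t
    rw [← Finset.sum_filter]
    have : (σ.powersetCard j).filter (fun τ => τ ⊆ nset Γ t)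
        = (σ ∩ nset Γ t).powersetCard j := by
      ext τ
      simp only [Finset.mem_filter, Finset.mem_powersetCard, Finset.subset_inter_iff]
      tauto
    rw [this, Finset.sum_const, Finset.card_powersetCard, smul_eq_mul, mul_one]
  simp only [key]
  rw [Finset.sum_comm]
  refine Finset.sum_congr rfl fun τ hτ => ?_
  obtain ⟨hτσ, -⟩ := Finset.mem_powersetCard.mp hτ
  rw [← Finset.sum_filter, Finset.filter_filter, Finset.sum_const, smul_eq_mul, mul_one]
  congr 1
  ext t
  simp only [Finset.mem_filter, Finset.mem_univ, true_and, Finset.mem_sdiff]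
  constructor
  · rintro ⟨htσ, hsub⟩
    refine ⟨?_, htσ⟩
    simp only [graphLink, Finset.mem_filter, Finset.mem_univ, true_and]
    exact ⟨fun ht => htσ (hτσ ht), fun u hu => (mem_nset Γ).mp (hsub hu)⟩
  · rintro ⟨hlink, htσ⟩
    simp only [graphLink, Finset.mem_filter, Finset.mem_univ, true_and] at hlink
    exact ⟨htσ, fun u hu => (mem_nset Γ).mpr (hlink.2 u hu)⟩

lemma link_sdiff_card (σ : Finset V) (hσ : Γ.IsClique (σ : Set V)) {τ : Finset V}
    (hτ : τ ⊆ σ) :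
    ((graphLink Γ τ) \ σ).card = (graphLink Γ τ).card - (σ.card - τ.card) := by
  have hinter : graphLink Γ τ ∩ σ = σ \ τ := by
    ext t
    simp only [Finset.mem_inter, Finset.mem_sdiff, graphLink, Finset.mem_filter,
      Finset.mem_univ, true_and]
    constructor
    · rintro ⟨⟨htτ, -⟩, htσ⟩
      exact ⟨htσ, htτ⟩
    · rintro ⟨htσ, htτ⟩
      exact ⟨⟨htτ, fun u hu => hσ (Finset.mem_coe.mpr htσ) (Finset.mem_coe.mpr (hτ hu))
        (fun h => htτ (h ▸ hu))⟩, htσ⟩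
  have hsd : graphLink Γ τ \ σ = graphLink Γ τ \ (graphLink Γ τ ∩ σ) := by
    rw [Finset.sdiff_inter_self_left]
  rw [hsd, Finset.card_sdiff_of_subset Finset.inter_subset_left, hinter, Finset.card_sdiff_of_subset hτ]

end Counting

section Counting2

variable [Fintype V]

lemma sum_choose_decompose (σ : Finset V) (j : ℕ) :
    ∑ t ∈ Finset.univ.filter (fun t => t ∉ σ), ((σ ∩ nset Γ t).card.choose j)
      = ∑ k ∈ Finset.range (σ.card + 1), (Nat.choose k j) * dcount Γ σ k := by
  rw [← Finset.sum_fiberwise_of_maps_to' (g := fun t => (σ ∩ nset Γ t).card)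
    (t := Finset.range (σ.card + 1))
    (fun t _ => Finset.mem_range.mpr (Nat.lt_succ_of_le
      (Finset.card_le_card Finset.inter_subset_left)))
    (fun k => Nat.choose k j)]
  refine Finset.sum_congr rfl fun k _ => ?_
  rw [Finset.sum_const, smul_eq_mul, Finset.filter_filter, mul_comm]
  rfl

lemma dcount_eq_zero {σ : Finset V} {k : ℕ} (h : σ.card < k) : dcount Γ σ k = 0 := by
  rw [dcount, Finset.card_eq_zero, Finset.filter_eq_empty_iff]
  rintro t - ⟨-, hcard⟩
  exact absurd (hcard ▸ Finset.card_le_card Finset.inter_subset_left) (Nat.not_le.mpr (hcard ▸ h))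

end Counting2

/-- The key comparison: for cliques `σ₁`, `σ₂` (possibly in different graphs) of the
same size whose sub-cliques have links of matching sizes, the extension counts are
equal. -/
lemma dcount_congr {V₁ V₂ : Type*} [Fintype V₁] [DecidableEq V₁]
    [Fintype V₂] [DecidableEq V₂]
    (Γ₁ : SimpleGraph V₁) [DecidableRel Γ₁.Adj] (Γ₂ : SimpleGraph V₂)
    [DecidableRel Γ₂.Adj] (σ₁ : Finset V₁) (σ₂ : Finset V₂)
    (hc₁ : Γ₁.IsClique (σ₁ : Set V₁)) (hc₂ : Γ₂.IsClique (σ₂ : Set V₂))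
    (hcard : σ₁.card = σ₂.card)
    (hlink : ∀ τ₁ ⊆ σ₁, ∀ τ₂ ⊆ σ₂, τ₁.card = τ₂.card →
      (graphLink Γ₁ τ₁).card = (graphLink Γ₂ τ₂).card) :
    ∀ j, dcount Γ₁ σ₁ j = dcount Γ₂ σ₂ j := by
  have hS : ∀ j, ∑ k ∈ Finset.range (σ₁.card + 1), (Nat.choose k j) * dcount Γ₁ σ₁ k
      = ∑ k ∈ Finset.range (σ₁.card + 1), (Nat.choose k j) * dcount Γ₂ σ₂ k := by
    intro j
    rw [← sum_choose_decompose]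
    conv_rhs => rw [hcard, ← sum_choose_decompose Γ₂]
    rw [sum_choose_eq, sum_choose_eq]
    by_cases hj : j ≤ σ₁.card
    · obtain ⟨τ₀, hτ₀sub, hτ₀card⟩ := Finset.exists_subset_card_eq (s := σ₂) (n := j) (hcard ▸ hj)
      have hterm₁ : ∀ τ ∈ σ₁.powersetCard j,
          ((graphLink Γ₁ τ) \ σ₁).card = (graphLink Γ₂ τ₀).card - (σ₂.card - j) := by
        intro τ hτ
        obtain ⟨hsub, hcardτ⟩ := Finset.mem_powersetCard.mp hτ
        rw [link_sdiff_card Γ₁ σ₁ hc₁ hsub,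
          hlink τ hsub τ₀ hτ₀sub (hcardτ.trans hτ₀card.symm), hcardτ, hcard]
      have hterm₂ : ∀ τ ∈ σ₂.powersetCard j,
          ((graphLink Γ₂ τ) \ σ₂).card = (graphLink Γ₂ τ₀).card - (σ₂.card - j) := by
        intro τ hτ
        obtain ⟨hsub, hcardτ⟩ := Finset.mem_powersetCard.mp hτ
        have : (graphLink Γ₂ τ).card = (graphLink Γ₂ τ₀).card := by
          obtain ⟨τ₁', hsub', hcard'⟩ :=
            Finset.exists_subset_card_eq (s := σ₁) (n := j) hj
          rw [← hlink τ₁' hsub' τ hsub (hcard'.trans hcardτ.symm),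
            hlink τ₁' hsub' τ₀ hτ₀sub (hcard'.trans hτ₀card.symm)]
        rw [link_sdiff_card Γ₂ σ₂ hc₂ hsub, this, hcardτ]
      rw [Finset.sum_congr rfl hterm₁, Finset.sum_congr rfl hterm₂,
        Finset.sum_const, Finset.sum_const, Finset.card_powersetCard,
        Finset.card_powersetCard, hcard]
    · rw [(Finset.powersetCard_eq_empty).mpr (Nat.lt_of_not_le hj),
        (Finset.powersetCard_eq_empty).mpr (hcard ▸ Nat.lt_of_not_le hj),
        Finset.sum_empty, Finset.sum_empty]
  -- downward induction on j
  have hd0 : ∀ k, σ₁.card < k → dcount Γ₁ σ₁ k = 0 ∧ dcount Γ₂ σ₂ k = 0 :=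
    fun k hk => ⟨dcount_eq_zero Γ₁ hk, dcount_eq_zero Γ₂ (hcard ▸ hk)⟩
  have aux : ∀ i j, σ₁.card + 1 ≤ j + i → dcount Γ₁ σ₁ j = dcount Γ₂ σ₂ j := by
    intro i
    induction i with
    | zero =>
      intro j hj
      obtain ⟨h1, h2⟩ := hd0 j (by omega)
      rw [h1, h2]
    | succ i ih =>
      intro j hj
      by_cases hjc : σ₁.card < j
      · obtain ⟨h1, h2⟩ := hd0 j hjc
        rw [h1, h2]
      · have hjmem : j ∈ Finset.range (σ₁.card + 1) := Finset.mem_range.mpr (by omega)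
        have hs := hS j
        rw [← Finset.sum_erase_add _ _ hjmem, ← Finset.sum_erase_add _ _ hjmem] at hs
        have hrest : ∑ k ∈ (Finset.range (σ₁.card + 1)).erase j,
            (Nat.choose k j) * dcount Γ₁ σ₁ k
            = ∑ k ∈ (Finset.range (σ₁.card + 1)).erase j,
              (Nat.choose k j) * dcount Γ₂ σ₂ k := by
          refine Finset.sum_congr rfl fun k hk => ?_
          obtain ⟨hkj, hkmem⟩ := Finset.mem_erase.mp hk
          rcases Nat.lt_or_ge k j with hlt | hge
          · rw [Nat.choose_eq_zero_of_lt hlt, zero_mul, zero_mul]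
          · have hkgt : j < k := lt_of_le_of_ne hge (Ne.symm hkj)
            rw [ih k (by omega)]
        rw [hrest] at hs
        have := Nat.add_left_cancel hs
        rwa [Nat.choose_self, one_mul, one_mul] at this
  exact fun j => aux (σ₁.card + 1) j (by omega)

section CCdef

variable [Fintype V]

/-- Number of extensions of a clique of size `k` seeing exactly `j` of its
vertices; defined via an arbitrary chosen clique of that size. -/
noncomputable def cC (k j : ℕ) : ℕ :=
  if h : ∃ σ : Finset V, Γ.IsClique (σ : Set V) ∧ σ.card = k then dcount Γ h.choose j
  else 0

lemma hlink_of_linkRegular (hreg : LinkRegular Γ) {σ σ' : Finset V}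
    (hσ : Γ.IsClique (σ : Set V)) (hσ' : Γ.IsClique (σ' : Set V)) :
    ∀ τ₁ ⊆ σ, ∀ τ₂ ⊆ σ', τ₁.card = τ₂.card →
      (graphLink Γ τ₁).card = (graphLink Γ τ₂).card := by
  intro τ₁ h₁ τ₂ h₂ hcard
  rcases Finset.eq_empty_or_nonempty τ₁ with rfl | hne
  · have : τ₂ = ∅ := Finset.card_eq_zero.mp (by simpa using hcard.symm)
    rw [this]
  · exact hreg τ₁ τ₂ (hσ.subset (Finset.coe_subset.mpr h₁))
      (hσ'.subset (Finset.coe_subset.mpr h₂)) hne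
      (Finset.card_pos.mp (hcard ▸ Finset.card_pos.mpr hne)) hcard

lemma dcount_eq_cC (hreg : LinkRegular Γ) {σ : Finset V} {k : ℕ}
    (hσ : Γ.IsClique (σ : Set V)) (hk : σ.card = k) (j : ℕ) :
    dcount Γ σ j = cC Γ k j := by
  have hex : ∃ σ : Finset V, Γ.IsClique (σ : Set V) ∧ σ.card = k := ⟨σ, hσ, hk⟩
  rw [cC, dif_pos hex]
  exact dcount_congr Γ Γ σ hex.choose hσ hex.choose_spec.1
    (hk.trans hex.choose_spec.2.symm)
    (hlink_of_linkRegular Γ hreg hσ hex.choose_spec.1) j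

/-- The number of pattern-avoiding words of length `n` whose state has size `k`. -/
def mcount (n k : ℕ) : ℕ :=
  ((words V n).filter (fun w => noPat Γ w ∧ (stateB Γ w).card = k)).card

/-- The number of pattern-avoiding words of length `n`. -/
def gcount (n : ℕ) : ℕ := ((words V n).filter (fun w => noPat Γ w)).card

lemma gcount_eq_sum (n : ℕ) :
    gcount Γ n = ∑ k ∈ Finset.range (n + 1), mcount Γ n k := by
  rw [gcount, Finset.card_eq_sum_ones]
  rw [← Finset.sum_fiberwise_of_maps_to (g := fun w => (stateB Γ w).card)
    (t := Finset.range (n + 1)) (fun w hw => Finset.mem_range.mpr (Nat.lt_succ_of_le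
      (by rw [← mem_words.mp (Finset.mem_filter.mp hw).1]; exact stateB_card_le Γ w)))]
  refine Finset.sum_congr rfl fun k _ => ?_
  rw [Finset.filter_filter, ← Finset.card_eq_sum_ones, mcount]

lemma mcount_zero_zero : mcount Γ 0 0 = 1 := by
  simp [mcount, words, Finset.filter_singleton]

lemma mcount_zero_succ (k : ℕ) : mcount Γ 0 (k + 1) = 0 := by
  simp [mcount, words, Finset.filter_singleton]

lemma mcount_succ_zero (n : ℕ) : mcount Γ (n + 1) 0 = 0 := by
  rw [mcount, Finset.card_eq_zero, Finset.filter_eq_empty_iff]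
  intro w hw
  rintro ⟨-, hcard⟩
  have hlen : w.length = n + 1 := mem_words.mp hw
  cases w with
  | nil => simp at hlen
  | cons t w =>
    have : t ∈ stateB Γ (t :: w) := by simp [stateB_cons]
    rw [Finset.card_eq_zero.mp hcard] at this
    simp at this

lemma mcount_succ_succ (hreg : LinkRegular Γ) (n j : ℕ) :
    mcount Γ (n + 1) (j + 1)
      = ∑ k ∈ Finset.range (n + 1), cC Γ k j * mcount Γ n k := by
  rw [mcount, words]
  rw [Finset.filter_biUnion, Finset.card_biUnion]
  swap
  · intro x _ y _ hxy
    simp only [Finset.disjoint_left, Finset.mem_filter, Finset.mem_image]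
    rintro w ⟨⟨u, -, rfl⟩, -⟩ ⟨⟨v, -, hv⟩, -⟩
    exact hxy (by injection hv with h1 _; exact h1.symm ▸ rfl)
  -- each piece
  have hpiece : ∀ t : V, (((words V n).image (fun w => t :: w)).filter
      (fun w => noPat Γ w ∧ (stateB Γ w).card = j + 1)).card
      = ((words V n).filter (fun w => noPat Γ w ∧ t ∉ stateB Γ w ∧
          ((stateB Γ w) ∩ nset Γ t).card = j)).card := by
    intro t
    rw [Finset.filter_image, Finset.card_image_of_injective _ (List.cons_injective)]
    congr 1
    apply Finset.filter_congr
    intro w _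
    simp only [noPat_cons, stateB_cons]
    constructor
    · rintro ⟨⟨ht, hw⟩, hcard⟩
      have hfil : (stateB Γ w).filter (fun x => Γ.Adj t x) = stateB Γ w ∩ nset Γ t := by
        ext x; simp [nset, Finset.mem_filter, Finset.mem_inter]
      rw [hfil] at hcard
      have htnotin : t ∉ stateB Γ w ∩ nset Γ t := fun h => ht (Finset.mem_inter.mp h).1
      rw [Finset.card_insert_of_notMem htnotin] at hcard
      exact ⟨hw, ht, Nat.succ_injective hcard⟩
    · rintro ⟨hw, ht, hcard⟩
      have hfil : (stateB Γ w).filter (fun x => Γ.Adj t x) = stateB Γ w ∩ nset Γ t := by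
        ext x; simp [nset, Finset.mem_filter, Finset.mem_inter]
      refine ⟨⟨ht, hw⟩, ?_⟩
      rw [hfil, Finset.card_insert_of_notMem (fun h => ht (Finset.mem_inter.mp h).1), hcard]
  rw [Finset.sum_congr rfl (fun t _ => hpiece t)]
  -- swap the summation order
  have hswap : ∑ t : V, ((words V n).filter (fun w => noPat Γ w ∧ t ∉ stateB Γ w ∧
      ((stateB Γ w) ∩ nset Γ t).card = j)).card
      = ∑ w ∈ (words V n).filter (fun w => noPat Γ w), dcount Γ (stateB Γ w) j := by
    simp only [Finset.card_filter]
    rw [Finset.sum_comm]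
    rw [Finset.sum_filter]
    refine Finset.sum_congr rfl fun w _ => ?_
    by_cases hw : noPat Γ w
    · rw [if_pos hw, dcount, Finset.card_filter]
      refine Finset.sum_congr rfl fun t _ => ?_
      simp [hw]
    · rw [if_neg hw]
      refine Finset.sum_eq_zero fun t _ => ?_
      simp [hw]
  rw [hswap]
  have hterm : ∀ w ∈ (words V n).filter (fun w => noPat Γ w),
      dcount Γ (stateB Γ w) j = cC Γ ((stateB Γ w).card) j := fun w _ =>
    dcount_eq_cC Γ hreg (stateB_isClique Γ w) rfl j
  rw [Finset.sum_congr rfl hterm]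
  rw [← Finset.sum_fiberwise_of_maps_to' (g := fun w => (stateB Γ w).card)
    (t := Finset.range (n + 1)) (fun w hw => Finset.mem_range.mpr (Nat.lt_succ_of_le
      (by rw [← mem_words.mp (Finset.mem_filter.mp hw).1]; exact stateB_card_le Γ w)))
    (fun k => cC Γ k j)]
  refine Finset.sum_congr rfl fun k _ => ?_
  rw [Finset.sum_const, smul_eq_mul, Finset.filter_filter, mul_comm]
  rw [mcount]

end CCdef

section Final

variable [Fintype V]

lemma growth_eq_gcount (n : ℕ) : racgGeodesicGrowth Γ n = gcount Γ n := by
  rw [racgGeodesicGrowth]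
  have hiff : ∀ w : List V, (racgIsGeodesic Γ w ∧ w.length = n)
      ↔ w ∈ (words V n).filter (fun w => noPat Γ w) := by
    intro w
    rw [Finset.mem_filter, mem_words, isGeodesic_iff_noPat]
    tauto
  rw [Nat.card_congr (Equiv.subtypeEquivRight hiff), Nat.card_eq_fintype_card,
    Fintype.card_coe, gcount]

lemma natcard_cliques_one :
    Nat.card {σ : Finset V // Γ.IsClique (σ : Set V) ∧ σ.card = 1} = Fintype.card V := by
  have hbij : Function.Bijective (fun v : V =>
      (⟨{v}, by simp [SimpleGraph.isClique_singleton], Finset.card_singleton v⟩ :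
        {σ : Finset V // Γ.IsClique (σ : Set V) ∧ σ.card = 1})) := by
    constructor
    · intro u v huv
      have := congrArg (fun x => x.1) huv
      simpa using this
    · rintro ⟨σ, hσ, hcard⟩
      obtain ⟨a, rfl⟩ := Finset.card_eq_one.mp hcard
      exact ⟨a, rfl⟩
  rw [← Nat.card_eq_of_bijective _ hbij, Nat.card_eq_fintype_card]

lemma exists_clique_iff (k : ℕ) :
    (∃ σ : Finset V, Γ.IsClique (σ : Set V) ∧ σ.card = k)
      ↔ Nat.card {σ : Finset V // Γ.IsClique (σ : Set V) ∧ σ.card = k} ≠ 0 := by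
  rw [Nat.card_ne_zero]
  constructor
  · rintro ⟨σ, h⟩
    exact ⟨⟨⟨σ, h⟩⟩, inferInstance⟩
  · rintro ⟨⟨⟨σ, h⟩⟩, -⟩
    exact ⟨σ, h⟩

end Final

end RacgAux

/-- Two link-regular graphs with the same number of cliques of each size, and
with same-size cliques having links of equal cardinality, define right-angled
Coxeter groups with identical geodesic growth functions. -/
theorem racg_geodesicGrowth_eq {V₁ V₂ : Type*} [Fintype V₁] [DecidableEq V₁]
    [Fintype V₂] [DecidableEq V₂]
    (Γ₁ : SimpleGraph V₁) [DecidableRel Γ₁.Adj] (Γ₂ : SimpleGraph V₂)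
    [DecidableRel Γ₂.Adj]
    (h₁ : LinkRegular Γ₁) (h₂ : LinkRegular Γ₂)
    (hcliques : ∀ k : ℕ, 1 ≤ k →
      Nat.card {σ : Finset V₁ // Γ₁.IsClique (σ : Set V₁) ∧ σ.card = k} =
      Nat.card {σ : Finset V₂ // Γ₂.IsClique (σ : Set V₂) ∧ σ.card = k})
    (hlinks : ∀ (σ₁ : Finset V₁) (σ₂ : Finset V₂),
      Γ₁.IsClique (σ₁ : Set V₁) → Γ₂.IsClique (σ₂ : Set V₂) →
      σ₁.Nonempty → σ₂.Nonempty → σ₁.card = σ₂.card →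
      (graphLink Γ₁ σ₁).card = (graphLink Γ₂ σ₂).card) :
    ∀ n : ℕ, racgGeodesicGrowth Γ₁ n = racgGeodesicGrowth Γ₂ n := by
  classical
  open RacgAux in
  intro n
  rw [growth_eq_gcount, growth_eq_gcount, gcount_eq_sum, gcount_eq_sum]
  have hV : Fintype.card V₁ = Fintype.card V₂ := by
    rw [← natcard_cliques_one Γ₁, ← natcard_cliques_one Γ₂]
    exact hcliques 1 le_rfl
  have hlink' : ∀ (σ₁ : Finset V₁) (σ₂ : Finset V₂),
      ∀ τ₁ ⊆ σ₁, ∀ τ₂ ⊆ σ₂, τ₁.card = τ₂.card → Γ₁.IsClique (σ₁ : Set V₁) →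
      Γ₂.IsClique (σ₂ : Set V₂) →
      (graphLink Γ₁ τ₁).card = (graphLink Γ₂ τ₂).card := by
    intro σ₁ σ₂ τ₁ hs₁ τ₂ hs₂ hcard hc₁ hc₂
    rcases Finset.eq_empty_or_nonempty τ₁ with rfl | hne
    · have hτ₂ : τ₂ = ∅ := Finset.card_eq_zero.mp (by simpa using hcard.symm)
      rw [hτ₂, graphLink_empty, graphLink_empty, Finset.card_univ, Finset.card_univ]
      exact hV
    · exact hlinks τ₁ τ₂ (hc₁.subset (Finset.coe_subset.mpr hs₁))
        (hc₂.subset (Finset.coe_subset.mpr hs₂)) hne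
        (Finset.card_pos.mp (hcard ▸ Finset.card_pos.mpr hne)) hcard
  have hcc : ∀ k j, cC Γ₁ k j = cC Γ₂ k j := by
    intro k j
    have hex : (∃ σ : Finset V₁, Γ₁.IsClique (σ : Set V₁) ∧ σ.card = k)
        ↔ (∃ σ : Finset V₂, Γ₂.IsClique (σ : Set V₂) ∧ σ.card = k) := by
      rcases Nat.eq_zero_or_pos k with rfl | hk
      · constructor <;> intro
        · exact ⟨∅, by simp [SimpleGraph.isClique_empty]⟩
        · exact ⟨∅, by simp [SimpleGraph.isClique_empty]⟩
      · rw [exists_clique_iff, exists_clique_iff, hcliques k hk]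
    rw [cC, cC]
    by_cases hex₁ : ∃ σ : Finset V₁, Γ₁.IsClique (σ : Set V₁) ∧ σ.card = k
    · have hex₂ := hex.mp hex₁
      rw [dif_pos hex₁, dif_pos hex₂]
      exact dcount_congr Γ₁ Γ₂ hex₁.choose hex₂.choose hex₁.choose_spec.1
        hex₂.choose_spec.1 (hex₁.choose_spec.2.trans hex₂.choose_spec.2.symm)
        (fun τ₁ hs₁ τ₂ hs₂ hc => hlink' hex₁.choose hex₂.choose τ₁ hs₁ τ₂ hs₂ hc
          hex₁.choose_spec.1 hex₂.choose_spec.1) j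
    · have hex₂ : ¬ ∃ σ : Finset V₂, Γ₂.IsClique (σ : Set V₂) ∧ σ.card = k :=
        fun h => hex₁ (hex.mpr h)
      rw [dif_neg hex₁, dif_neg hex₂]
  have hM : ∀ m k, mcount Γ₁ m k = mcount Γ₂ m k := by
    intro m
    induction m with
    | zero =>
      intro k
      cases k with
      | zero => rw [mcount_zero_zero, mcount_zero_zero]
      | succ k => rw [mcount_zero_succ, mcount_zero_succ]
    | succ m ih =>
      intro k
      cases k with
      | zero => rw [mcount_succ_zero, mcount_succ_zero]
      | succ k =>
        rw [mcount_succ_succ Γ₁ h₁, mcount_succ_succ Γ₂ h₂]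
        exact Finset.sum_congr rfl fun k' _ => by rw [hcc k' k, ih k']
  exact Finset.sum_congr rfl fun k _ => hM n k
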